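/- For all a, b, μ ≥ 0 with a ≤ b, and c ≥ 1, one has ψ(c·a, μ) ≤ ψ(c, μ)·ψ(b, μ); in particular if y ≥ 0 and β, T ≥ 0 then ψ(e^{βT}·y, μ) ≤ ψ(e^{βT}, μ)·ψ(y, μ). -/

import Mathlib

noncomputable def psi (x μ : ℝ) : ℝ := x * Real.exp (μ * Real.sqrt (2 * Real.log (1 + x)))

/-! Since `1 + x y ≤ (1 + x)(1 + y)` and `√` is subadditive, the exponent `√(2 log (1 + x))` is
subadditive with respect to multiplication, so `ψ(x y, μ) ≤ ψ(x, μ) ψ(y, μ)`; together with the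
monotonicity of `ψ(·, μ)` this gives `ψ(c a, μ) ≤ ψ(c b, μ) ≤ ψ(c, μ) ψ(b, μ)`. -/

open Real Set

lemma Real.sqrt_add_le_add_sqrt (x y : ℝ) : √(x + y) ≤ √x + √y := by
  rw [sqrt_le_iff]
  refine ⟨by positivity, ?_⟩
  nlinarith [sq_sqrt' (x := x), sq_sqrt' (x := y), le_max_left x 0, le_max_left y 0,
    mul_nonneg (sqrt_nonneg x) (sqrt_nonneg y)]

lemma Real.log_one_add_mul_le {x y : ℝ} (hx : 0 ≤ x) (hy : 0 ≤ y) :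
    log (1 + x * y) ≤ log (1 + x) + log (1 + y) := by
  rw [← log_mul (by positivity) (by positivity)]
  exact log_le_log (by positivity) (by nlinarith)

lemma sqrt_two_log_one_add_mul_le {x y : ℝ} (hx : 0 ≤ x) (hy : 0 ≤ y) :
    √(2 * log (1 + x * y)) ≤ √(2 * log (1 + x)) + √(2 * log (1 + y)) :=
  calc √(2 * log (1 + x * y)) ≤ √(2 * log (1 + x) + 2 * log (1 + y)) :=
        sqrt_le_sqrt (by linarith [log_one_add_mul_le hx hy])
    _ ≤ √(2 * log (1 + x)) + √(2 * log (1 + y)) := sqrt_add_le_add_sqrt _ _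

lemma psi_monotoneOn {μ : ℝ} (hμ : 0 ≤ μ) : MonotoneOn (psi · μ) (Ici 0) := by
  intro x (hx : 0 ≤ x) y _ (hxy : x ≤ y)
  show psi x μ ≤ psi y μ
  unfold psi
  gcongr

lemma psi_mul_le {x y μ : ℝ} (hx : 0 ≤ x) (hy : 0 ≤ y) (hμ : 0 ≤ μ) :
    psi (x * y) μ ≤ psi x μ * psi y μ := by
  unfold psi
  rw [mul_mul_mul_comm, ← exp_add, ← mul_add]
  gcongr
  exact sqrt_two_log_one_add_mul_le hx hy

theorem psi_mul_le_of_le :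
    (∀ a b c μ : ℝ, 0 ≤ a → a ≤ b → 0 ≤ μ → 1 ≤ c →
        psi (c * a) μ ≤ psi c μ * psi b μ) ∧
    (∀ y β T μ : ℝ, 0 ≤ y → 0 ≤ β → 0 ≤ T → 0 ≤ μ →
        psi (Real.exp (β * T) * y) μ ≤ psi (Real.exp (β * T)) μ * psi y μ) := by
  refine ⟨fun a b c μ ha hab hμ hc => ?_,
    fun y β T μ hy _ _ hμ => psi_mul_le (exp_pos _).le hy hμ⟩
  have hc₀ : 0 ≤ c := zero_le_one.trans hc
  have hb : 0 ≤ b := ha.trans hab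
  calc psi (c * a) μ ≤ psi (c * b) μ :=
        psi_monotoneOn hμ (mul_nonneg hc₀ ha) (mul_nonneg hc₀ hb)
          (mul_le_mul_of_nonneg_left hab hc₀)
    _ ≤ psi c μ * psi b μ := psi_mul_le hc₀ hb hμ
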